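/- arXiv:1201.3814 — 5 statements merged into one kernel-verified Lean document; each statement's English description precedes it below -/
import Mathlib

section
/- Let A be an uncountable abelian group and let ℵ be a cardinal with ℵ₀ ≤ ℵ < |A|. Then A contains a subgroup B such that the index (A : B) equals ℵ. -/
/-!
Take a subgroup `V ≤ A` of cardinality `ℵ` and, by Zorn's lemma, a subgroup `C` maximal with
`C ∩ V = 0`. Then `V` embeds into `A ⧸ C`, and by maximality its image is essential: every
nonzero element of `A ⧸ C` has a nonzero multiple in it. An essential extension `G` of an
infinite group `V` has cardinality at most `|V|`: the `p`-torsion of `G` lies in `V` for every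
prime `p`, so induction on the prime factors of `n` bounds `{x | n • x ∈ V}` by `|V|`, and `G` is
the countable union of these sets.
-/

universe u

open Cardinal

namespace AddSubgroup

section AddGroup

variable {G : Type u} [AddGroup G]

theorem exists_cardinalMk_eq {c : Cardinal.{u}} (hc : ℵ₀ ≤ c) (hcG : c ≤ #G) :
    ∃ V : AddSubgroup G, #V = c := by
  obtain ⟨s, rfl⟩ := le_mk_iff_exists_set.1 hcG
  have : Nonempty s := mk_ne_zero_iff.1 (aleph0_pos.trans_le hc).ne'
  refine ⟨closure s, le_antisymm ?_ (mk_le_mk_of_subset subset_closure)⟩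
  calc #(closure s) ≤ #(FreeAddGroup s) := by
        rw [FreeAddGroup.closure_eq_range]
        exact mk_range_le
    _ = #s := by rw [mk_freeAddGroup, max_eq_left hc]

theorem exists_maximal_disjoint (V : AddSubgroup G) : ∃ C, Maximal (Disjoint · V) C := by
  have hchain : ∀ c ⊆ {C : AddSubgroup G | Disjoint C V}, IsChain (· ≤ ·) c →
      ∀ D ∈ c, ∃ ub ∈ {C | Disjoint C V}, ∀ E ∈ c, E ≤ ub := by
    refine fun c hcV hc D hD => ⟨sSup c, disjoint_def.2 fun hxc hxV => ?_, fun _ => le_sSup⟩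
    obtain ⟨E, hEc, hxE⟩ := (mem_sSup_of_directedOn ⟨D, hD⟩ hc.directedOn).1 hxc
    exact disjoint_def.1 (hcV hEc) hxE hxV
  obtain ⟨C, -, hC⟩ := zorn_le_nonempty₀ _ hchain ⊥ disjoint_bot_left
  exact ⟨C, hC⟩

theorem _root_.Cardinal.mk_le_mk_image_mul_mk_ker {H : Type u} [AddGroup H]
    (f : G →+ H) (s : Set G) : #s ≤ #(f '' s) * #f.ker := by
  -- `x` is determined by `f x` and by its offset from a fixed preimage of `f x`.
  set g := Function.invFunOn f s
  have hg : ∀ x ∈ s, f (g (f x)) = f x := fun x hx => Function.invFunOn_eq ⟨x, hx, rfl⟩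
  rw [← lift_id #(f '' s), ← lift_id #f.ker, ← mk_prod]
  refine mk_le_of_injective (f := fun x : s => (⟨f x, Set.mem_image_of_mem f x.2⟩,
    ⟨-g (f x) + x, by rw [AddMonoidHom.mem_ker, map_add, map_neg, hg x x.2, neg_add_cancel]⟩))
    fun x y hxy => ?_
  have hfxy : f x = f y := congrArg (Subtype.val ∘ Prod.fst) hxy
  have hoffset : -g (f x) + x = -g (f y) + y := congrArg (Subtype.val ∘ Prod.snd) hxy
  rw [hfxy] at hoffset
  exact Subtype.ext (add_left_cancel hoffset)

end AddGroup

section AddCommGroup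

variable {G : Type u} [AddCommGroup G]

def IsEssential (V : AddSubgroup G) : Prop :=
  ∀ ⦃x : G⦄, x ≠ 0 → ∃ k : ℤ, k • x ∈ V ∧ k • x ≠ 0

namespace IsEssential

variable {V : AddSubgroup G}

theorem mem_of_prime_nsmul_eq_zero (hV : V.IsEssential) {p : ℕ} (hp : p.Prime) {x : G}
    (hx : p • x = 0) : x ∈ V := by
  obtain rfl | hx0 := eq_or_ne x 0
  · exact V.zero_mem
  obtain ⟨k, hkV, hk0⟩ := hV hx0
  have hpk : ¬(p : ℤ) ∣ k := by
    rintro ⟨j, rfl⟩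
    rw [mul_comm, mul_smul, natCast_zsmul, hx, smul_zero] at hk0
    exact hk0 rfl
  obtain ⟨a, b, hab⟩ := (Nat.prime_iff_prime_int.1 hp).coprime_iff_not_dvd.2 hpk
  have hxk : x = b • k • x := calc
    x = (a * p + b * k) • x := by rw [hab, one_smul]
    _ = a • p • x + b • k • x := by rw [add_smul, mul_smul, mul_smul, natCast_zsmul]
    _ = b • k • x := by rw [hx, smul_zero, zero_add]
  rw [hxk]
  exact zsmul_mem hkV b

theorem exists_nsmul_mem (hV : V.IsEssential) (x : G) : ∃ n : ℕ, n ≠ 0 ∧ n • x ∈ V := by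
  obtain rfl | hx0 := eq_or_ne x 0
  · exact ⟨1, one_ne_zero, by rw [smul_zero]; exact V.zero_mem⟩
  obtain ⟨k, hkV, hk0⟩ := hV hx0
  refine ⟨k.natAbs, fun h => hk0 (by rw [Int.natAbs_eq_zero.1 h, zero_smul]), ?_⟩
  rcases Int.natAbs_eq k with h | h
  · rwa [h, natCast_zsmul] at hkV
  · rwa [h, neg_smul, neg_mem_iff, natCast_zsmul] at hkV

theorem cardinalMk_setOf_nsmul_mem_le (hV : V.IsEssential) {n : ℕ} (hn : n ≠ 0) :
    #{x : G | n • x ∈ V} ≤ max #V ℵ₀ := by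
  induction n using induction_on_primes with
  | zero => exact absurd rfl hn
  | one =>
    rw [show {x : G | 1 • x ∈ V} = V by ext; simp]
    exact le_max_left _ _
  | prime_mul p a hp ih =>
    let f : G →+ G := DistribSMul.toAddMonoidHom G p
    have himage : f '' {x | (p * a) • x ∈ V} ⊆ {y | a • y ∈ V} := by
      rintro _ ⟨x, hx, rfl⟩
      show a • p • x ∈ V
      rwa [smul_smul, mul_comm]
    have hker : #f.ker ≤ #V := mk_le_mk_of_subset fun x hx => hV.mem_of_prime_nsmul_eq_zero hp hx
    calc #{x : G | (p * a) • x ∈ V}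
        ≤ #(f '' {x | (p * a) • x ∈ V}) * #f.ker := mk_le_mk_image_mul_mk_ker f _
      _ ≤ max #V ℵ₀ * max #V ℵ₀ := mul_le_mul' ((mk_le_mk_of_subset himage).trans
          (ih (right_ne_zero_of_mul hn))) (hker.trans (le_max_left _ _))
      _ = max #V ℵ₀ := mul_eq_self (le_max_right _ _)

theorem cardinalMk_le (hV : V.IsEssential) : #G ≤ max #V ℵ₀ := by
  refine mk_le_of_countable_eventually_mem (l := Filter.atTop)
    (f := fun n : ℕ => {x : G | n.factorial • x ∈ V}) (fun x => ?_)
    fun n => hV.cardinalMk_setOf_nsmul_mem_le n.factorial_ne_zero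
  obtain ⟨k, hk0, hkV⟩ := hV.exists_nsmul_mem x
  filter_upwards [Filter.eventually_ge_atTop k] with n hn
  obtain ⟨m, hm⟩ := Nat.dvd_factorial (Nat.pos_of_ne_zero hk0) hn
  rw [hm, mul_comm, mul_smul]
  exact nsmul_mem hkV m

end IsEssential

theorem isEssential_map_mk'_of_maximal_disjoint {C V : AddSubgroup G}
    (hC : Maximal (Disjoint · V) C) : (V.map (QuotientAddGroup.mk' C)).IsEssential := by
  intro x hx
  obtain ⟨a, rfl⟩ := QuotientAddGroup.mk'_surjective C x
  have ha : a ∉ C := fun h => hx ((QuotientAddGroup.eq_zero_iff a).2 h)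
  have hnot : ¬Disjoint (C ⊔ zmultiples a) V := fun hdisj =>
    ha (hC.2 hdisj le_sup_left (le_sup_right (a := C) (mem_zmultiples a)))
  obtain ⟨v, hv, hvV, hv0⟩ : ∃ v ∈ C ⊔ zmultiples a, v ∈ V ∧ v ≠ 0 := by
    simpa [disjoint_def] using hnot
  obtain ⟨c, hc, _, ⟨k, rfl⟩, rfl⟩ := mem_sup.1 hv
  have hck : QuotientAddGroup.mk' C (c + k • a) = k • QuotientAddGroup.mk' C a := by
    rw [map_add, map_zsmul, QuotientAddGroup.mk'_apply C c, (QuotientAddGroup.eq_zero_iff c).2 hc,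
      zero_add]
  refine ⟨k, ⟨c + k • a, hvV, hck⟩, fun h0 => hv0 ?_⟩
  rw [← hck, QuotientAddGroup.mk'_apply C, QuotientAddGroup.eq_zero_iff] at h0
  exact disjoint_def.1 hC.1 h0 hvV

theorem cardinalMk_le_cardinalMk_quotient_of_disjoint {C V : AddSubgroup G}
    (hCV : Disjoint C V) : #V ≤ #(G ⧸ C) :=
  mk_le_of_injective (f := fun v : V => (v : G ⧸ C)) fun v w hvw =>
    Subtype.ext <| neg_add_eq_zero.1 <|
      disjoint_def.1 hCV (QuotientAddGroup.eq.1 hvw) (add_mem (neg_mem v.2) w.2)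

theorem exists_cardinalMk_quotient_eq (V : AddSubgroup G) (hV : ℵ₀ ≤ #V) :
    ∃ C : AddSubgroup G, #(G ⧸ C) = #V := by
  obtain ⟨C, hC⟩ := V.exists_maximal_disjoint
  refine ⟨C, le_antisymm ?_ (cardinalMk_le_cardinalMk_quotient_of_disjoint hC.1)⟩
  calc #(G ⧸ C) ≤ max #(V.map (QuotientAddGroup.mk' C)) ℵ₀ :=
        (isEssential_map_mk'_of_maximal_disjoint hC).cardinalMk_le
    _ ≤ max #V ℵ₀ := max_le_max_right _ mk_image_le
    _ = #V := max_eq_left hV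

end AddCommGroup

end AddSubgroup

theorem uncountable_abelian_has_subgroup_of_index_general (A : Type u) [AddCommGroup A]
    (ℵ : Cardinal.{u}) (h₁ : Cardinal.aleph0 ≤ ℵ) (h₂ : ℵ < Cardinal.mk A) :
    ∃ B : AddSubgroup A, Cardinal.mk (A ⧸ B) = ℵ := by
  obtain ⟨V, rfl⟩ := AddSubgroup.exists_cardinalMk_eq h₁ h₂.le
  exact V.exists_cardinalMk_quotient_eq h₁

/-- Let `A` be an uncountable abelian group and `ℵ` a cardinal with `ℵ₀ ≤ ℵ < |A|`.
Then `A` contains a subgroup `B` such that the index `(A : B)`, i.e. the cardinality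
of `A ⧸ B`, equals `ℵ`. -/
theorem uncountable_abelian_has_subgroup_of_index (A : Type u) [AddCommGroup A]
    (hA : Cardinal.aleph0 < Cardinal.mk A)
    (ℵ : Cardinal.{u}) (h₁ : Cardinal.aleph0 ≤ ℵ) (h₂ : ℵ < Cardinal.mk A) :
    ∃ B : AddSubgroup A, Cardinal.mk (A ⧸ B) = ℵ :=
  uncountable_abelian_has_subgroup_of_index_general A ℵ h₁ h₂
end

section
/- Every uncountable abelian group has a proper subgroup of countably infinite index, i.e. a subgroup B with |A/B| = ℵ₀. -/
universe u

/-!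
If `A` has an element `a` of infinite order, the embedding `ℤ ≅ ⟨a⟩ → ℚ` extends to `A → ℚ`
because `ℚ` is divisible, hence injective, and its kernel has countably infinite index.
Otherwise `A` is torsion. If every `A[p]` were finite, so would be every `A[n]`, and
`A = ⋃ A[n]` would be countable. Hence some `A[p]` is an infinite `𝔽_p`-vector space; it
surjects onto `ℕ →₀ 𝔽_p`, which embeds into the countable divisible group `ℕ →₀ ℚ/ℤ`, and
extending again gives a homomorphism on `A` with countably infinite image.
-/

open Cardinal Function AddSubgroup

instance AddCircle.countable {𝕜 : Type*} [AddCommGroup 𝕜] [Countable 𝕜] (p : 𝕜) :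
    Countable (AddCircle p) :=
  (QuotientAddGroup.mk'_surjective _).countable

noncomputable instance Finsupp.divisibleBy {ι M α : Type*} [AddMonoid M] [Zero α]
    [SMulZeroClass α M] [DivisibleBy M α] : DivisibleBy (ι →₀ M) α :=
  divisibleByOfSMulRightSurj _ _ fun hn f => by
    obtain ⟨g, rfl⟩ := Finsupp.mapRange_surjective _ (smul_zero _)
      (DivisibleBy.surjective_smul M α hn) f
    exact ⟨g, by ext; simp⟩

theorem ZMod.exists_addMonoidHom_injective_of_addOrderOf_eq {G : Type*} [AddGroup G] {x : G}
    {n : ℕ} (hx : addOrderOf x = n) : ∃ φ : ZMod n →+ G, Injective φ :=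
  ⟨ZMod.lift n ⟨zmultiplesHom G x, by simp [← hx, addOrderOf_nsmul_eq_zero]⟩,
    (ZMod.lift_injective n).2 fun m hm => by
      rwa [ZMod.intCast_zmod_eq_zero_iff_dvd, ← hx, addOrderOf_dvd_iff_zsmul_eq_zero]⟩

theorem AddCircle.exists_zmod_addMonoidHom_injective {𝕜 : Type*} [Field 𝕜] [LinearOrder 𝕜]
    [IsStrictOrderedRing 𝕜] {p : 𝕜} [Fact (0 < p)] {n : ℕ} (hn : 0 < n) :
    ∃ φ : ZMod n →+ AddCircle p, Injective φ :=
  ZMod.exists_addMonoidHom_injective_of_addOrderOf_eq (AddCircle.addOrderOf_period_div hn)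

theorem Module.exists_linearMap_finsupp_nat_surjective (R V : Type*) [Ring R] [Finite R]
    [AddCommGroup V] [Module R V] [Module.Free R V] [Infinite V] :
    ∃ f : V →ₗ[R] (ℕ →₀ R), Surjective f := by
  let b := Module.Free.chooseBasis R V
  have : Infinite (Module.Free.ChooseBasisIndex R V) := by
    by_contra h
    rw [not_infinite_iff_finite] at h
    have : Module.Finite R V := .of_basis b
    have := Module.finite_of_finite R (M := V)
    exact not_finite V
  let e := Infinite.natEmbedding (Module.Free.ChooseBasisIndex R V)
  exact ⟨(Finsupp.lmapDomain R R (invFun e)).comp b.repr.toLinearMap,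
    (Finsupp.mapDomain_surjective (invFun_surjective e.injective)).comp b.repr.surjective⟩

section

variable {A : Type*} [AddCommGroup A]

theorem AddMonoidHom.exists_mk_quotient_eq_aleph0_of_infinite_range {Q : Type*} [AddGroup Q]
    [Countable Q] (f : A →+ Q) (hf : (Set.range f).Infinite) :
    ∃ B : AddSubgroup A, B ≠ ⊤ ∧ #(A ⧸ B) = ℵ₀ := by
  let e := QuotientAddGroup.quotientKerEquivRange f
  have : Countable (A ⧸ f.ker) := Countable.of_equiv _ e.symm.toEquiv
  have : Infinite f.range := by rw [← SetLike.coe_sort_coe, f.coe_range]; exact hf.to_subtype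
  have : Infinite (A ⧸ f.ker) := Infinite.of_injective _ e.symm.injective
  refine ⟨f.ker, fun htop => ?_, mk_eq_aleph0 _⟩
  have : Subsingleton (A ⧸ f.ker) := htop ▸ QuotientAddGroup.subsingleton_quotient_top
  exact not_finite (A ⧸ f.ker)

theorem exists_mk_quotient_eq_aleph0_of_divisibleBy {S D : Type*} [AddCommGroup S]
    [AddCommGroup D] [DivisibleBy D ℤ] [Countable D] (i : S →+ A) (hi : Injective i)
    (g : S →+ D) (hg : (Set.range g).Infinite) :
    ∃ B : AddSubgroup A, B ≠ ⊤ ∧ #(A ⧸ B) = ℵ₀ := by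
  obtain ⟨f, rfl⟩ := (Module.Baer.of_divisible D).extension_property_addMonoidHom i hi g
  exact f.exists_mk_quotient_eq_aleph0_of_infinite_range
    (hg.mono (Set.range_comp_subset_range i f))

theorem exists_mk_quotient_eq_aleph0_of_not_isOfFinAddOrder {a : A} (ha : ¬IsOfFinAddOrder a) :
    ∃ B : AddSubgroup A, B ≠ ⊤ ∧ #(A ⧸ B) = ℵ₀ :=
  exists_mk_quotient_eq_aleph0_of_divisibleBy (zmultiplesHom A a)
    (injective_zsmul_iff_not_isOfFinAddOrder.2 ha) (Int.castAddHom ℚ)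
    (Set.infinite_range_of_injective Int.cast_injective)

theorem exists_mk_quotient_eq_aleph0_of_infinite_torsionBy {p : ℕ} (hp : p.Prime)
    [Infinite (torsionBy A p)] : ∃ B : AddSubgroup A, B ≠ ⊤ ∧ #(A ⧸ B) = ℵ₀ := by
  have : Fact p.Prime := ⟨hp⟩
  let _ := torsionBy.zmodModule (A := A) (n := p)
  obtain ⟨f, hf⟩ := Module.exists_linearMap_finsupp_nat_surjective (ZMod p) (torsionBy A p)
  obtain ⟨φ, hφ⟩ := AddCircle.exists_zmod_addMonoidHom_injective (p := (1 : ℚ)) hp.pos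
  refine exists_mk_quotient_eq_aleph0_of_divisibleBy (torsionBy A p).subtype Subtype.coe_injective
    ((Finsupp.mapRange.addMonoidHom φ).comp f.toAddMonoidHom) ?_
  rw [AddMonoidHom.coe_comp, LinearMap.toAddMonoidHom_coe, hf.range_comp]
  exact Set.infinite_range_of_injective (Finsupp.mapRange_injective _ (map_zero φ) hφ)

theorem finite_torsionBy_mul {a b : ℕ} [Finite (torsionBy A a)] [Finite (torsionBy A b)] :
    Finite (torsionBy A (a * b : ℕ)) := by
  let f : torsionBy A (a * b : ℕ) →+ torsionBy A b :=
    ((nsmulAddMonoidHom a).comp (torsionBy A _).subtype).codRestrict _ fun x =>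
      torsionBy.nsmul_iff.2 (by simpa [smul_smul, mul_comm b a] using torsionBy.nsmul_iff.1 x.2)
  rw [f.finite_iff_finite_ker_range]
  refine ⟨Finite.of_injective (fun x => (⟨x.1, ?_⟩ : torsionBy A a)) fun x y hxy => ?_,
    inferInstance⟩
  · simpa [f] using congrArg Subtype.val x.2
  · exact Subtype.ext (Subtype.ext (congrArg Subtype.val hxy :))

theorem finite_torsionBy_of_forall_prime (h : ∀ p : ℕ, p.Prime → Finite (torsionBy A p)) {n : ℕ}
    (hn : n ≠ 0) : Finite (torsionBy A n) := by
  induction n using Nat.recOnMul with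
  | zero => contradiction
  | one =>
    have : Subsingleton (torsionBy A (1 : ℕ)) :=
      subsingleton_of_forall_eq 0 fun x => by simpa using torsionBy.nsmul x
    infer_instance
  | prime p hp => exact h p hp
  | mul a b iha ihb =>
    have := iha (left_ne_zero_of_mul hn)
    have := ihb (right_ne_zero_of_mul hn)
    exact finite_torsionBy_mul

theorem countable_of_isAddTorsion (hA : IsAddTorsion A)
    (h : ∀ n : ℕ, n ≠ 0 → Finite (torsionBy A n)) : Countable A := by
  have hcover : ⋃ n : ℕ, (torsionBy A (n + 1 : ℕ) : Set A) = Set.univ := by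
    refine Set.eq_univ_of_forall fun x => Set.mem_iUnion.2 ?_
    obtain ⟨n, hn, hnx⟩ := (hA x).exists_nsmul_eq_zero
    exact ⟨n - 1, torsionBy.nsmul_iff.2 (by rwa [Nat.sub_add_cancel hn])⟩
  refine Set.countable_univ_iff.1 (hcover ▸ Set.countable_iUnion fun n => ?_)
  have := h (n + 1) n.succ_ne_zero
  exact (Set.toFinite _).countable

end

/-- Every uncountable abelian group has a proper subgroup of countably infinite index,
i.e. a subgroup `B` with `|A ⧸ B| = ℵ₀`. -/
theorem uncountable_abelian_has_proper_subgroup_of_countable_index (A : Type u) [AddCommGroup A]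
    (hA : Cardinal.aleph0 < Cardinal.mk A) :
    ∃ B : AddSubgroup A, B ≠ ⊤ ∧ Cardinal.mk (A ⧸ B) = Cardinal.aleph0 := by
  by_cases htors : IsAddTorsion A
  · by_cases hfin : ∀ p : ℕ, p.Prime → Finite (torsionBy A p)
    · have := countable_of_isAddTorsion htors fun n => finite_torsionBy_of_forall_prime hfin
      exact absurd hA (mk_le_aleph0_iff.2 this).not_gt
    · push Not at hfin
      obtain ⟨p, hp, hinf⟩ := hfin
      exact exists_mk_quotient_eq_aleph0_of_infinite_torsionBy hp
  · obtain ⟨a, ha⟩ := not_forall.1 htors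
    exact exists_mk_quotient_eq_aleph0_of_not_isOfFinAddOrder ha
end

section
/- Let A be an uncountable abelian group, ℵ a cardinal with ℵ₀ ≤ ℵ < |A|, and suppose the index of the torsion subgroup of A in A is at least ℵ. Then there is a subgroup B of A of index ℵ such that A/B is torsion free. -/
universe u

/-- The Mathlib (Dec 2024) definition, since removed: no nontrivial element has finite order. -/
def AddMonoid.IsTorsionFree (G : Type*) [AddMonoid G] : Prop :=
  ∀ g : G, g ≠ 0 → ¬IsOfFinAddOrder g

/-!
Tensoring with `ℚ` kills exactly the torsion, so `A ⧸ torsion A` is an additive subgroup `S` of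
`V = ℚ ⊗[ℤ] A` spanning `V`, and any nonzero such subgroup has cardinality `max (dim V) ℵ₀`.
Dividing `V` by a subspace `U` with `dim (V ⧸ U) = min ℵ (dim V)` maps `S` onto a spanning
subgroup of `V ⧸ U`, of cardinality `ℵ`. Its preimage `B` in `A` has `A ⧸ B` embedded in the
`ℚ`-vector space `V ⧸ U`, hence torsion-free.
-/

open Cardinal Submodule TensorProduct

lemma max_min_eq_of_le_of_le_max {α : Type*} [LinearOrder α] {a d x : α} (hax : a ≤ x)
    (hx : x ≤ max d a) : max (min x d) a = x := by
  rcases le_total x d with hxd | hdx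
  · rw [min_eq_left hxd, max_eq_left hax]
  · rw [min_eq_right hdx]
    rcases le_max_iff.mp hx with h | h <;> apply le_antisymm <;> simp_all

lemma AddMonoid.isTorsionFree_of_isAddTorsionFree {G : Type*} [AddCommGroup G]
    [IsAddTorsionFree G] : AddMonoid.IsTorsionFree G :=
  fun _ hg => not_isOfFinAddOrder_of_isAddTorsionFree hg

lemma AddMonoid.isTorsionFree_quotient_ker {A M : Type*} [AddCommGroup A] [AddCommGroup M]
    [IsAddTorsionFree M] (f : A →+ M) : AddMonoid.IsTorsionFree (A ⧸ f.ker) :=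
  have := (QuotientAddGroup.kerLift_injective f).isAddTorsionFree
  AddMonoid.isTorsionFree_of_isAddTorsionFree

lemma IsLocalizedModule.ker_eq_torsion {A V : Type*} [AddCommGroup A] [AddCommGroup V]
    [Module ℤ V] (f : A →ₗ[ℤ] V) [IsLocalizedModule (nonZeroDivisors ℤ) f] :
    f.toAddMonoidHom.ker = AddCommGroup.torsion A := by
  rw [← Submodule.torsion_int]
  ext a
  exact IsLocalizedModule.eq_zero_iff (nonZeroDivisors ℤ) f

lemma exists_rank_quotient_eq {K V : Type*} [DivisionRing K] [AddCommGroup V] [Module K V]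
    {κ : Cardinal} (hκ : κ ≤ Module.rank K V) :
    ∃ U : Submodule K V, Module.rank K (V ⧸ U) = κ := by
  let b := Module.Free.chooseBasis K V
  rw [Module.Free.rank_eq_card_chooseBasisIndex] at hκ
  obtain ⟨s, hs⟩ := le_mk_iff_exists_set.mp hκ
  obtain ⟨U, hU⟩ := (span K (b '' s)).exists_isCompl
  refine ⟨U, ?_⟩
  rw [(quotientEquivOfIsCompl U _ hU.symm).rank_eq, rank_span_set, mk_image_eq b.injective, hs]
  exact (b.linearIndependent.linearIndepOn s).id_image

lemma mk_eq_max_rank_aleph0_of_span_eq_top {V : Type*} [AddCommGroup V] [Module ℚ V]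
    [Nontrivial V] (S : AddSubgroup V) (hS : span ℚ (S : Set V) = ⊤) :
    #S = max (Module.rank ℚ V) ℵ₀ := by
  let b := Module.Free.chooseBasis ℚ V
  have hV : #V = max (Module.rank ℚ V) ℵ₀ := by
    rw [mk_congr b.repr.toEquiv, Module.Free.rank_eq_card_chooseBasisIndex,
      mk_finsupp_lift_of_infinite']
    simp
  have hrank : Module.rank ℚ V ≤ #S := by
    rw [← rank_top, ← hS]
    exact rank_span_le _
  obtain ⟨x, hxS, hx⟩ : ∃ x ∈ S, x ≠ 0 := by
    by_contra! h
    rw [(AddSubgroup.eq_bot_iff_forall S).mpr h] at hS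
    simp at hS
  have : Infinite S := by
    have := IsAddTorsionFree.of_module_rat V
    exact Set.infinite_coe_iff.mpr <| Set.Infinite.mono (AddSubgroup.zmultiples_le.mpr hxS)
      (infinite_zmultiples.mpr (not_isOfFinAddOrder_of_isAddTorsionFree hx))
  exact le_antisymm (hV ▸ mk_subtype_le _) (max_le hrank (aleph0_le_mk S))

lemma exists_mk_map_mkQ_eq_of_span_eq_top {V : Type*} [AddCommGroup V] [Module ℚ V]
    (S : AddSubgroup V) (hS : span ℚ (S : Set V) = ⊤) {ℵ : Cardinal} (h₁ : ℵ₀ ≤ ℵ) (h₂ : ℵ ≤ #S) :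
    ∃ U : Submodule ℚ V, #(S.map U.mkQ.toAddMonoidHom) = ℵ := by
  have : Infinite S := infinite_iff.mpr (h₁.trans h₂)
  have : Infinite V := .of_injective _ (Subtype.val_injective (p := (· ∈ S)))
  have hℵ : ℵ ≤ max (Module.rank ℚ V) ℵ₀ := mk_eq_max_rank_aleph0_of_span_eq_top S hS ▸ h₂
  obtain ⟨U, hU⟩ := exists_rank_quotient_eq (min_le_right ℵ (Module.rank ℚ V))
  have : Nontrivial (V ⧸ U) := by
    rw [← rank_pos_iff_nontrivial (R := ℚ), hU]
    exact lt_min (aleph0_pos.trans_le h₁) rank_pos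
  have hspan : span ℚ (S.map U.mkQ.toAddMonoidHom : Set (V ⧸ U)) = ⊤ := by
    rw [AddSubgroup.coe_map]
    change span ℚ (U.mkQ '' _) = ⊤
    rw [span_image, hS, Submodule.map_top, range_mkQ]
  refine ⟨U, ?_⟩
  rw [mk_eq_max_rank_aleph0_of_span_eq_top _ hspan, hU, max_min_eq_of_le_of_le_max h₁ hℵ]

theorem exists_pure_subgroup_of_index_with_torsionfree_quotient_general (A : Type u) [AddCommGroup A]
    (ℵ : Cardinal.{u}) (h₁ : Cardinal.aleph0 ≤ ℵ)
    (htor : ℵ ≤ Cardinal.mk (A ⧸ AddCommGroup.torsion A)) :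
    ∃ B : AddSubgroup A, Cardinal.mk (A ⧸ B) = ℵ ∧ AddMonoid.IsTorsionFree (A ⧸ B) := by
  let φ := TensorProduct.mk ℤ ℚ A 1
  have : IsLocalizedModule (nonZeroDivisors ℤ) φ :=
    (isLocalizedModule_iff_isBaseChange _ ℚ φ).mpr (TensorProduct.isBaseChange ℤ A ℚ)
  have hφ : #(A ⧸ AddCommGroup.torsion A) = #φ.toAddMonoidHom.range := by
    rw [← IsLocalizedModule.ker_eq_torsion φ]
    exact mk_congr (QuotientAddGroup.quotientKerEquivRange _).toEquiv
  have hspan : span ℚ (φ.toAddMonoidHom.range : Set (ℚ ⊗[ℤ] A)) = ⊤ := by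
    simpa using span_eq_top_of_isLocalizedModule ℚ (nonZeroDivisors ℤ) φ span_univ
  obtain ⟨U, hU⟩ := exists_mk_map_mkQ_eq_of_span_eq_top _ hspan h₁ (hφ ▸ htor)
  let ψ := U.mkQ.toAddMonoidHom.comp φ.toAddMonoidHom
  have : IsAddTorsionFree ((ℚ ⊗[ℤ] A) ⧸ U) := .of_module_rat _
  refine ⟨ψ.ker, ?_, AddMonoid.isTorsionFree_quotient_ker ψ⟩
  rw [mk_congr (QuotientAddGroup.quotientKerEquivRange ψ).toEquiv, AddMonoidHom.range_comp, hU]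

/-- Let `A` be an uncountable abelian group, `ℵ` a cardinal with `ℵ₀ ≤ ℵ < |A|`,
and suppose the index of the torsion subgroup of `A` in `A` is at least `ℵ`.
Then there is a subgroup `B` of `A` of index `ℵ` such that `A ⧸ B` is torsion free. -/
theorem exists_pure_subgroup_of_index_with_torsionfree_quotient (A : Type u) [AddCommGroup A]
    (hA : Cardinal.aleph0 < Cardinal.mk A)
    (ℵ : Cardinal.{u}) (h₁ : Cardinal.aleph0 ≤ ℵ) (h₂ : ℵ < Cardinal.mk A)
    (htor : ℵ ≤ Cardinal.mk (A ⧸ AddCommGroup.torsion A)) :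
    ∃ B : AddSubgroup A, Cardinal.mk (A ⧸ B) = ℵ ∧ AddMonoid.IsTorsionFree (A ⧸ B) :=
  exists_pure_subgroup_of_index_with_torsionfree_quotient_general A ℵ h₁ htor
end

section
/- Let G be an infinite compact Hausdorff topological group with identity component G₀. Then w(G) = max(w(G₀), w(G/G₀)), where w denotes the topological weight. -/
/-!
Connectedness plays no role: the identity holds for every closed subgroup `H` of an infinite
compact Hausdorff group `G`. The weights of `H` and `G ⧸ H` are at most that of `G`, as `H ↪ G` is
an embedding and `π : G → G ⧸ H` an open quotient map. Conversely, finitely many translates of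
each member of a neighbourhood basis at `1` cover the compact group `G`, and all these translates
form a basis of `G`; so it suffices to find a neighbourhood basis at `1` of cardinality at most
`max (w H) (w (G ⧸ H))`, which is infinite because `G` is. For a basic neighbourhood `i` of `1` in
`H` pick a closed neighbourhood `C i` of `1` in `G` whose trace on `H` lies in `i`. Since `π` is a
closed map, whenever `i ⊆ U` some basic neighbourhood `w` of `π 1` satisfies `C i ∩ π⁻¹ w ⊆ U`,
so the sets `C i ∩ π⁻¹ w` form the required basis.
-/

universe u

/-- The weight of a topological space: the minimal cardinality of a basis of the topology. -/
noncomputable def topWeight (X : Type u) [TopologicalSpace X] : Cardinal.{u} :=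
  sInf { c : Cardinal.{u} |
    ∃ B : Set (Set X), TopologicalSpace.IsTopologicalBasis B ∧ Cardinal.mk B = c }

open TopologicalSpace Set Cardinal Topology Pointwise Filter

section Weight

variable {X Y : Type u} [TopologicalSpace X] [TopologicalSpace Y]

theorem exists_isTopologicalBasis_mk_eq_topWeight (X : Type u) [TopologicalSpace X] :
    ∃ B : Set (Set X), IsTopologicalBasis B ∧ #B = topWeight X :=
  csInf_mem (s := {c | ∃ B : Set (Set X), IsTopologicalBasis B ∧ #B = c})
    ⟨_, _, isTopologicalBasis_opens, rfl⟩

theorem topWeight_le_mk {B : Set (Set X)} (hB : IsTopologicalBasis B) : topWeight X ≤ #B :=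
  csInf_le' ⟨B, hB, rfl⟩

theorem Topology.IsInducing.topWeight_le {f : X → Y} (hf : IsInducing f) :
    topWeight X ≤ topWeight Y := by
  obtain ⟨B, hB, hBY⟩ := exists_isTopologicalBasis_mk_eq_topWeight Y
  calc topWeight X ≤ #(preimage f '' B) := topWeight_le_mk (hB.isInducing hf)
    _ ≤ #B := mk_image_le
    _ = topWeight Y := hBY

theorem IsOpenQuotientMap.topWeight_le {f : X → Y} (hf : IsOpenQuotientMap f) :
    topWeight Y ≤ topWeight X := by
  obtain ⟨B, hB, hBX⟩ := exists_isTopologicalBasis_mk_eq_topWeight X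
  calc topWeight Y ≤ #(image f '' B) :=
        topWeight_le_mk (hB.isQuotientMap hf.isQuotientMap hf.isOpenMap)
    _ ≤ #B := mk_image_le
    _ = topWeight X := hBX

theorem TopologicalSpace.IsTopologicalBasis.mk_le_two_power [T0Space X] {B : Set (Set X)}
    (hB : IsTopologicalBasis B) : #X ≤ 2 ^ #B := by
  calc #X ≤ #(Set B) := mk_le_of_injective (f := fun x ↦ {b : B | x ∈ (b : Set X)})
        fun x y hxy ↦ hB.eq_iff.2 fun b hb ↦ Set.ext_iff.1 hxy ⟨b, hb⟩
    _ = 2 ^ #B := mk_set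

theorem aleph0_le_topWeight [T0Space X] [Infinite X] : ℵ₀ ≤ topWeight X := by
  obtain ⟨B, hB, hBX⟩ := exists_isTopologicalBasis_mk_eq_topWeight X
  rw [← hBX]
  by_contra! hfin
  exact (aleph0_le_mk X).not_gt <|
    hB.mk_le_two_power.trans_lt (power_lt_aleph0 (by norm_num) hfin)

end Weight

theorem IsClosedMap.exists_mem_nhds_inter_preimage_subset {X Y : Type*} [TopologicalSpace X]
    [TopologicalSpace Y] {f : X → Y} (hf : IsClosedMap f)
    (hfc : Continuous f) {C U : Set X} (hC : IsClosed C) (hU : IsOpen U) {y : Y}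
    (hCU : C ∩ f ⁻¹' {y} ⊆ U) : ∃ V ∈ 𝓝 y, C ∩ f ⁻¹' V ⊆ U := by
  have hfiber : Cᶜ ∪ U ∈ 𝓝ˢ (f ⁻¹' {y}) :=
    (hC.isOpen_compl.union hU).mem_nhdsSet.2 fun x hx ↦
      or_iff_not_imp_left.2 fun hxC ↦ hCU ⟨not_not.1 hxC, hx⟩
  rw [← hf.comap_nhds_eq hfc, mem_comap] at hfiber
  obtain ⟨V, hV, hVU⟩ := hfiber
  exact ⟨V, hV, fun x ⟨hxC, hxV⟩ ↦ (hVU hxV).resolve_left (not_not.2 hxC)⟩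

section CompactGroup

variable {G : Type u} [Group G] [TopologicalSpace G] [IsTopologicalGroup G]

theorem exists_open_nhds_one_inv_mul_subset {U : Set G} (hU : U ∈ 𝓝 (1 : G)) :
    ∃ V : Set G, IsOpen V ∧ (1 : G) ∈ V ∧ V⁻¹ * V ⊆ U := by
  obtain ⟨V, hVo, hV1, hVU⟩ := exists_open_nhds_one_mul_subset hU
  refine ⟨V ∩ V⁻¹, hVo.inter hVo.inv, ⟨hV1, by simpa using hV1⟩, ?_⟩
  calc (V ∩ V⁻¹)⁻¹ * (V ∩ V⁻¹) ⊆ V * V :=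
        mul_subset_mul (by simp [Set.inter_inv, inter_subset_right]) inter_subset_left
    _ ⊆ U := hVU

theorem topWeight_le_of_hasBasis_nhds_one [CompactSpace G] {ι : Type u} {p : ι → Prop}
    {s : ι → Set G} (hs : (𝓝 (1 : G)).HasBasis p s) : topWeight G ≤ max #ι ℵ₀ := by
  choose! V hVo hV1 hVs using fun i (hi : p i) ↦
    exists_open_nhds_one_inv_mul_subset (hs.mem_of_mem hi)
  choose! t ht using fun i (hi : p i) ↦ compact_covered_by_mul_left_translates isCompact_univ
    (V := V i) (by rw [(hVo i hi).interior_eq]; exact ⟨1, hV1 i hi⟩)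
  set B : Set (Set G) := ⋃ i ∈ {i | p i}, (fun g ↦ (g * ·) ⁻¹' V i) '' (t i : Set G)
  have hB : IsTopologicalBasis B := by
    refine isTopologicalBasis_of_isOpen_of_nhds ?_ fun x O hxO hO ↦ ?_
    · simp only [B, mem_iUnion, mem_image]
      rintro _ ⟨i, hi, g, -, rfl⟩
      exact (hVo i hi).preimage (continuous_const_mul g)
    obtain ⟨i, hi, hsO⟩ := hs.mem_iff.1 <|
      (continuous_const_mul x).continuousAt.preimage_mem_nhds (by simpa using hO.mem_nhds hxO)
    obtain ⟨g, hg, hxg⟩ := mem_iUnion₂.1 (ht i hi (mem_univ x))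
    refine ⟨(g * ·) ⁻¹' V i, mem_biUnion hi (mem_image_of_mem _ hg), hxg, fun z hz ↦ ?_⟩
    have hxz : x⁻¹ * z ∈ s i := by
      rw [← inv_mul_cancel_left g z, ← mul_assoc, ← mul_inv_rev]
      exact hVs i hi (mul_mem_mul (inv_mem_inv.2 hxg) hz)
    simpa using hsO hxz
  calc topWeight G ≤ #B := topWeight_le_mk hB
    _ ≤ #{i | p i} * ⨆ i : {i | p i}, #((fun g ↦ (g * ·) ⁻¹' V i) '' (t i : Set G)) :=
        mk_biUnion_le _ _
    _ ≤ #ι * ℵ₀ := by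
        gcongr
        · exact mk_set_le _
        · exact ciSup_le' fun i ↦ (lt_aleph0_of_finite _).le
    _ ≤ max #ι ℵ₀ := by simpa using mul_le_max #ι ℵ₀

section ClosedSubgroup

variable [CompactSpace G] (H : Subgroup G) [IsClosed (H : Set G)]

theorem exists_hasBasis_nhds_one_of_isTopologicalBasis {B₀ : Set (Set H)}
    (hB₀ : IsTopologicalBasis B₀) {B₁ : Set (Set (G ⧸ H))} (hB₁ : IsTopologicalBasis B₁) :
    ∃ s : B₀ × B₁ → Set G, (𝓝 (1 : G)).HasBasis (fun q ↦ s q ∈ 𝓝 (1 : G)) s := by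
  have hC : ∀ i ∈ B₀, (1 : H) ∈ i → ∃ C ∈ 𝓝 (1 : G), IsClosed C ∧ (↑) ⁻¹' C ⊆ i := by
    intro i hi hi1
    have : i ∈ comap ((↑) : H → G) (𝓝 ((1 : H) : G)) := by
      rw [← IsInducing.subtypeVal.nhds_eq_comap]
      exact (hB₀.isOpen hi).mem_nhds hi1
    obtain ⟨t, ht, hti⟩ := mem_comap.1 this
    obtain ⟨C, hC, hCc, hCt⟩ := exists_mem_nhds_isClosed_subset ht
    exact ⟨C, hC, hCc, (preimage_mono hCt).trans hti⟩
  choose! C hC1 hCc hCi using hC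
  refine ⟨fun q ↦ C q.1 ∩ (QuotientGroup.mk : G → G ⧸ H) ⁻¹' q.2, ⟨fun U ↦ ⟨fun hU ↦ ?_, ?_⟩⟩⟩
  · obtain ⟨i, hi, hi1, hiU⟩ := hB₀.exists_subset_of_mem_open (a := 1)
      (show ((1 : H) : G) ∈ interior U from mem_interior_iff_mem_nhds.2 hU)
      (isOpen_interior.preimage continuous_subtype_val)
    have hfiber : C i ∩ QuotientGroup.mk ⁻¹' {((1 : G) : G ⧸ H)} ⊆ interior U := by
      rintro x ⟨hxC, hx⟩
      have hxH : x ∈ H := by simpa using QuotientGroup.eq.1 hx.symm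
      exact hiU (hCi i hi hi1 (show (⟨x, hxH⟩ : H) ∈ (↑) ⁻¹' C i from hxC))
    obtain ⟨V, hV, hVU⟩ :=
      QuotientGroup.continuous_mk.isClosedMap.exists_mem_nhds_inter_preimage_subset
        QuotientGroup.continuous_mk (hCc i hi hi1) isOpen_interior hfiber
    obtain ⟨w, hw, hw1, hwV⟩ := hB₁.mem_nhds_iff.1 hV
    refine ⟨(⟨i, hi⟩, ⟨w, hw⟩), inter_mem (hC1 i hi hi1) ?_, ?_⟩
    · exact QuotientGroup.continuous_mk.continuousAt.preimage_mem_nhds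
        ((hB₁.isOpen hw).mem_nhds hw1)
    · exact (inter_subset_inter_right _ (preimage_mono hwV)).trans (hVU.trans interior_subset)
  · rintro ⟨q, hq, hqU⟩
    exact mem_of_superset hq hqU

theorem topWeight_le_max_topWeight_subgroup_quotient :
    topWeight G ≤ max (max (topWeight H) (topWeight (G ⧸ H))) ℵ₀ := by
  obtain ⟨B₀, hB₀, hB₀H⟩ := exists_isTopologicalBasis_mk_eq_topWeight H
  obtain ⟨B₁, hB₁, hB₁Q⟩ := exists_isTopologicalBasis_mk_eq_topWeight (G ⧸ H)
  obtain ⟨s, hs⟩ := exists_hasBasis_nhds_one_of_isTopologicalBasis H hB₀ hB₁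
  calc topWeight G ≤ max #(B₀ × B₁) ℵ₀ := topWeight_le_of_hasBasis_nhds_one hs
    _ = max (topWeight H * topWeight (G ⧸ H)) ℵ₀ := by rw [mk_prod, lift_id, lift_id, hB₀H, hB₁Q]
    _ ≤ max (max (topWeight H) (topWeight (G ⧸ H))) ℵ₀ :=
        max_le (mul_le_max _ _) (le_max_right _ _)

theorem aleph0_le_max_topWeight_subgroup_quotient [T2Space G] [Infinite G] :
    ℵ₀ ≤ max (topWeight H) (topWeight (G ⧸ H)) := by
  have : Infinite ((G ⧸ H) × H) := .of_injective _ H.groupEquivQuotientProdSubgroup.injective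
  rcases infinite_prod.1 this with ⟨hQ, -⟩ | ⟨-, hH⟩
  · exact le_max_of_le_right aleph0_le_topWeight
  · exact le_max_of_le_left aleph0_le_topWeight

theorem topWeight_eq_max_topWeight_subgroup_quotient [T2Space G] [Infinite G] :
    topWeight G = max (topWeight H) (topWeight (G ⧸ H)) := by
  refine le_antisymm ?_ (max_le IsInducing.subtypeVal.topWeight_le
    QuotientGroup.isOpenQuotientMap_mk.topWeight_le)
  simpa [aleph0_le_max_topWeight_subgroup_quotient H] using
    topWeight_le_max_topWeight_subgroup_quotient H

end ClosedSubgroup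

end CompactGroup

/-- For an infinite compact Hausdorff group $G$ with identity component $G_0$,
one has $w(G)=\max\{w(G_0), w(G/G_0)\}$. -/
theorem weight_eq_max_weight_component_weight_quotient (G : Type u) [Group G]
    [TopologicalSpace G] [IsTopologicalGroup G] [CompactSpace G] [T2Space G] [Infinite G] :
    topWeight G = max (topWeight (Subgroup.connectedComponentOfOne G))
      (topWeight (G ⧸ Subgroup.connectedComponentOfOne G)) := by
  have : IsClosed (Subgroup.connectedComponentOfOne G : Set G) := isClosed_connectedComponent
  exact topWeight_eq_max_topWeight_subgroup_quotient _
end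

section
/- Let G be a compact Hausdorff topological group and S a suitable subset of G, i.e. S does not contain the identity, S is closed and discrete in G \ {1}, and the closure of the subgroup generated by S is G. Then |S| ≤ w(G). -/
universe u

/-- `S` is a suitable subset of the topological group `G`: it does not contain the
identity, `S ∪ {1}` is closed in `G`, `S` is discrete in the subspace topology
(equivalently, discrete in `G \ {1}`, since `1 ∉ S`), and the closed subgroup
generated by `S` is all of `G`. -/
def IsSuitable (G : Type u) [Group G] [TopologicalSpace G] [IsTopologicalGroup G]
    (S : Set G) : Prop :=
  (1 : G) ∉ S ∧ IsClosed (S ∪ {1}) ∧ DiscreteTopology S ∧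
    (Subgroup.closure S).topologicalClosure = ⊤

/-! Every basis of a discrete space contains all singletons, and a basis of `X` restricts to a
basis of any subspace; so a discrete subspace is no larger than any basis of `X`. -/

open Set TopologicalSpace Cardinal

namespace TopologicalSpace.IsTopologicalBasis

variable {X : Type u} [TopologicalSpace X] {B : Set (Set X)}

theorem singleton_mem [DiscreteTopology X] (hB : IsTopologicalBasis B) (x : X) : {x} ∈ B := by
  obtain ⟨b, hbB, hxb, hbx⟩ := hB.exists_subset_of_mem_open (mem_singleton x) (isOpen_discrete _)
  rwa [(Set.nonempty_of_mem hxb).subset_singleton_iff.mp hbx] at hbB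

theorem mk_le_of_discreteTopology [DiscreteTopology X] (hB : IsTopologicalBasis B) : #X ≤ #B :=
  mk_le_of_injective (f := fun x ↦ ⟨{x}, hB.singleton_mem x⟩)
    fun _ _ h ↦ singleton_injective (congrArg Subtype.val h)

theorem mk_subtype_le_of_discreteTopology (hB : IsTopologicalBasis B) (S : Set X)
    [DiscreteTopology S] : #S ≤ #B :=
  calc #S ≤ #(preimage ((↑) : S → X) '' B) :=
        (hB.isInducing .subtypeVal).mk_le_of_discreteTopology
    _ ≤ #B := mk_image_le

end TopologicalSpace.IsTopologicalBasis

theorem mk_le_topWeight_of_discreteTopology {X : Type u} [TopologicalSpace X] (S : Set X)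
    [DiscreteTopology S] : #S ≤ topWeight X :=
  le_csInf ⟨_, _, isTopologicalBasis_opens, rfl⟩ fun _ ⟨_, hB, hc⟩ ↦
    hc ▸ hB.mk_subtype_le_of_discreteTopology S

theorem card_suitable_le_weight_general (G : Type u) [Group G] [TopologicalSpace G]
    [IsTopologicalGroup G]
    (S : Set G) (hS : IsSuitable G S) :
    Cardinal.mk S ≤ topWeight G :=
  have : DiscreteTopology S := hS.2.2.1
  mk_le_topWeight_of_discreteTopology S

/-- For any suitable subset `S` of a compact Hausdorff group `G`, `|S| ≤ w(G)`. -/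
theorem card_suitable_le_weight (G : Type u) [Group G] [TopologicalSpace G]
    [IsTopologicalGroup G] [CompactSpace G] [T2Space G]
    (S : Set G) (hS : IsSuitable G S) :
    Cardinal.mk S ≤ topWeight G :=
  card_suitable_le_weight_general G S hS
end
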